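/- arXiv:math/0410267 — 6 statements merged into one kernel-verified Lean document; each statement's English description precedes it below -/
import Mathlib

section
/- Let (I, ≼, K, φ) be allowable. Then the relation 𝒫(I, ≼, K, φ) is a partial order on K, and a partial order ⊴ on K satisfies the condition 'i ≼ j implies φ(i) ⊴ φ(j)' if and only if ⊴ dominates 𝒫(I, ≼, K, φ). -/
namespace JoyceIII

/-- `r` dominates `s` (for relations on `K`): `k s l` implies `k r l`. -/
def Dominates {K : Type*} (r s : K → K → Prop) : Prop :=
  ∀ i j, s i j → r i j

/-- `(I, ≼, K, φ)` is allowable: there exists a partial order `⊴` on `K` such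
that `i ≼ j` implies `φ i ⊴ φ j`. -/
def Allowable {I K : Type*} (pr : I → I → Prop) (φ : I → K) : Prop :=
  ∃ tl : K → K → Prop, IsPartialOrder K tl ∧ ∀ i j, pr i j → tl (φ i) (φ j)

/-- The relation `𝒫(I, ≼, K, φ)` on `K`: `k` is related to `l` iff there are
`b ≥ 0` and `i₀, …, i_b`, `j₀, …, j_b` in `I` with `φ i₀ = k`, `φ j_b = l`,
`i_a ≼ j_a` for `0 ≤ a ≤ b`, and `φ (i_a) = φ (j_(a-1))` for `1 ≤ a ≤ b`. -/
def PRel {I K : Type*} (pr : I → I → Prop) (φ : I → K) (k l : K) : Prop :=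
  ∃ (b : ℕ) (i j : ℕ → I),
    φ (i 0) = k ∧ φ (j b) = l ∧
    (∀ a, a ≤ b → pr (i a) (j a)) ∧
    (∀ a, 1 ≤ a → a ≤ b → φ (i a) = φ (j (a - 1)))

lemma pRel_of_pr {I K : Type*} {pr : I → I → Prop} {φ : I → K} {i j : I}
    (h : pr i j) : PRel pr φ (φ i) (φ j) :=
  ⟨0, fun _ => i, fun _ => j, rfl, rfl, fun _ _ => h, fun a h1 h0 => by omega⟩

lemma pRel_to_tl {I K : Type*} {pr : I → I → Prop} {φ : I → K}
    {tl : K → K → Prop} (htrans : Transitive tl)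
    (h : ∀ i j, pr i j → tl (φ i) (φ j)) {k l : K}
    (hkl : PRel pr φ k l) : tl k l := by
  obtain ⟨b, i, j, hi0, hjb, hij, hstep⟩ := hkl
  subst hi0 hjb
  have key : ∀ a, a ≤ b → tl (φ (i 0)) (φ (j a)) := by
    intro a
    induction a with
    | zero => intro ha; exact h _ _ (hij 0 (Nat.zero_le _))
    | succ n ih =>
      intro ha
      have heq : φ (i (n + 1)) = φ (j n) := by
        have := hstep (n + 1) (by omega) ha
        simpa using this
      have h2 : tl (φ (i (n + 1))) (φ (j (n + 1))) := h _ _ (hij _ ha)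
      exact htrans (ih (by omega)) (heq ▸ h2)
  exact key b le_rfl

lemma pRel_trans {I K : Type*} {pr : I → I → Prop} {φ : I → K} {k l m : K}
    (h1 : PRel pr φ k l) (h2 : PRel pr φ l m) : PRel pr φ k m := by
  obtain ⟨b₁, i₁, j₁, hi₁, hj₁, hij₁, hs₁⟩ := h1
  obtain ⟨b₂, i₂, j₂, hi₂, hj₂, hij₂, hs₂⟩ := h2
  refine ⟨b₁ + 1 + b₂,
    fun a => if a ≤ b₁ then i₁ a else i₂ (a - (b₁ + 1)),
    fun a => if a ≤ b₁ then j₁ a else j₂ (a - (b₁ + 1)), ?_, ?_, ?_, ?_⟩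
  · simpa using hi₁
  · simp only [if_neg (show ¬ (b₁ + 1 + b₂ ≤ b₁) by omega),
      show b₁ + 1 + b₂ - (b₁ + 1) = b₂ by omega]
    exact hj₂
  · intro a ha
    by_cases hc : a ≤ b₁
    · simp only [if_pos hc]; exact hij₁ a hc
    · simp only [if_neg hc]; exact hij₂ _ (by omega)
  · intro a ha1 hab
    by_cases hc : a ≤ b₁
    · have hc' : a - 1 ≤ b₁ := by omega
      simp only [if_pos hc, if_pos hc']
      exact hs₁ a ha1 hc
    · by_cases hd : a = b₁ + 1
      · have hc' : a - 1 ≤ b₁ := by omega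
        simp only [if_neg hc, if_pos hc']
        have : a - (b₁ + 1) = 0 := by omega
        rw [this, hi₂]
        have : a - 1 = b₁ := by omega
        rw [this, hj₁]
      · have hc' : ¬ (a - 1 ≤ b₁) := by omega
        simp only [if_neg hc, if_neg hc']
        have h3 := hs₂ (a - (b₁ + 1)) (by omega) (by omega)
        convert h3 using 3
        omega

/-- **Definition/Property 6.6.** For allowable `(I, ≼, K, φ)`, the relation
`𝒫(I, ≼, K, φ)` is a partial order on `K`, and a partial order `⊴` on `K`
satisfies `i ≼ j → φ i ⊴ φ j` if and only if `⊴` dominates `𝒫(I, ≼, K, φ)`. -/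
theorem pRel_isPartialOrder_and_dominates_iff
    {I K : Type*} [Fintype I] [Fintype K]
    (pr : I → I → Prop) (hpr : IsPartialOrder I pr)
    (φ : I → K) (hφ : Function.Surjective φ)
    (hallow : Allowable pr φ) :
    IsPartialOrder K (PRel pr φ) ∧
    ∀ tl : K → K → Prop, IsPartialOrder K tl →
      ((∀ i j, pr i j → tl (φ i) (φ j)) ↔ Dominates tl (PRel pr φ)) := by
  obtain ⟨tl₀, htl₀, hdom₀⟩ := hallow
  constructor
  · refine { refl := ?_, trans := ?_, antisymm := ?_ }
    · intro k
      obtain ⟨i, rfl⟩ := hφ k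
      exact pRel_of_pr (hpr.refl i)
    · exact fun k l m => pRel_trans
    · intro k l hkl hlk
      exact htl₀.antisymm k l
        (pRel_to_tl htl₀.trans hdom₀ hkl)
        (pRel_to_tl htl₀.trans hdom₀ hlk)
  · intro tl htl
    constructor
    · intro h k l hkl
      exact pRel_to_tl htl.trans h hkl
    · intro h i j hij
      exact h _ _ (pRel_of_pr hij)

end JoyceIII
end

section
/- Suppose (I, ≼, J, ψ) is allowable with ≲ = 𝒫(I, ≼, J, ψ), and ξ : J → K is a surjective map to a finite set K. Then (J, ≲, K, ξ) is allowable if and only if (I, ≼, K, ξ ∘ ψ) is allowable, and when they are allowable, 𝒫(J, ≲, K, ξ) = 𝒫(I, ≼, K, ξ ∘ ψ). -/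
/-!
`𝒫(I, ≼, K, φ)` is the transitive closure of the image `φ(≼)` of `≼` on `K`. Taking the image of
a transitive closure and closing again gives the same relation as closing the image directly,
so `𝒫(J, 𝒫(I, ≼, J, ψ), K, ξ) = 𝒫(I, ≼, K, ξ ∘ ψ)`. Since a partial order is transitive, it
contains `φ(≼)` exactly when it contains `𝒫(I, ≼, K, φ)`, so allowability depends only on
`𝒫(I, ≼, K, φ)`, and both allowability conditions agree.
-/

namespace JoyceIII

open Relation

section

variable {I J K : Type*}

theorem transGen_map_transGen (r : I → I → Prop) (f : I → K) :
    TransGen (Relation.Map (TransGen r) f f) = TransGen (Relation.Map r f f) :=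
  le_antisymm
    (TransGen.closed fun _ _ ⟨_, _, h, hx, hy⟩ =>
      hx ▸ hy ▸ TransGen.lift f (le_onFun_map f) _ _ h)
    (TransGen.mono (map_mono fun _ _ => .single))

theorem PRel.tail {pr : I → I → Prop} {φ : I → K} {k l m : K} (hkl : PRel pr φ k l)
    (hlm : Relation.Map pr φ φ l m) : PRel pr φ k m := by
  obtain ⟨b, i, j, hi, hj, hpr, hlink⟩ := hkl
  obtain ⟨i', j', hij', rfl, rfl⟩ := hlm
  refine ⟨b + 1, fun a => if a ≤ b then i a else i', fun a => if a ≤ b then j a else j',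
    by simpa using hi, by simp, fun a _ => ?_, fun a ha1 ha2 => ?_⟩
  · by_cases h : a ≤ b <;> simp only [h, if_true, if_false]
    · exact hpr a h
    · exact hij'
  · by_cases h : a ≤ b
    · simp only [h, show a - 1 ≤ b by omega, if_true]
      exact hlink a ha1 h
    · obtain rfl : a = b + 1 := by omega
      simp [hj]

theorem pRel_eq_transGen (pr : I → I → Prop) (φ : I → K) :
    PRel pr φ = TransGen (Relation.Map pr φ φ) := by
  ext k l
  constructor
  · rintro ⟨b, i, j, rfl, rfl, hpr, hlink⟩
    suffices ∀ a ≤ b, TransGen (Relation.Map pr φ φ) (φ (i 0)) (φ (j a)) from this b le_rfl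
    intro a ha
    induction a with
    | zero => exact .single ⟨_, _, hpr 0 ha, rfl, rfl⟩
    | succ a ih =>
      refine (ih (by omega)).tail ⟨_, _, hpr (a + 1) ha, ?_, rfl⟩
      simpa using hlink (a + 1) (by omega) ha
  · intro h
    induction h with
    | single h =>
      obtain ⟨i, j, hij, rfl, rfl⟩ := h
      exact ⟨0, fun _ => i, fun _ => j, rfl, rfl, fun _ _ => hij, by omega⟩
    | tail _ hlm ih => exact ih.tail hlm

theorem allowable_iff_exists_pRel_le {pr : I → I → Prop} {φ : I → K} :
    Allowable pr φ ↔ ∃ tl : K → K → Prop, IsPartialOrder K tl ∧ PRel pr φ ≤ tl := by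
  rw [pRel_eq_transGen]
  refine exists_congr fun tl => and_congr_right fun _ => ⟨fun h => ?_, fun h i j hij => ?_⟩
  · exact transGen_minimal fun _ _ ⟨i, j, hij, hi, hj⟩ => hi ▸ hj ▸ h i j hij
  · exact h _ _ (.single ⟨i, j, hij, rfl, rfl⟩)

theorem pRel_pRel (pr : I → I → Prop) (ψ : I → J) (ξ : J → K) :
    PRel (PRel pr ψ) ξ = PRel pr (ξ ∘ ψ) := by
  rw [pRel_eq_transGen, pRel_eq_transGen, pRel_eq_transGen, transGen_map_transGen, map_map]

end

theorem pRel_transitivity_general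
    {I J K : Type*} (pr : I → I → Prop) (ψ : I → J) (ξ : J → K) :
    (Allowable (PRel pr ψ) ξ ↔ Allowable pr (ξ ∘ ψ)) ∧
    (Allowable (PRel pr ψ) ξ → PRel (PRel pr ψ) ξ = PRel pr (ξ ∘ ψ)) := by
  refine ⟨?_, fun _ => pRel_pRel pr ψ ξ⟩
  rw [allowable_iff_exists_pRel_le, allowable_iff_exists_pRel_le, pRel_pRel]

/-- **Lemma 6.7.** If `(I, ≼, J, ψ)` is allowable with `≲ = 𝒫(I, ≼, J, ψ)` and
`ξ : J → K` is surjective, then `(J, ≲, K, ξ)` is allowable iff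
`(I, ≼, K, ξ ∘ ψ)` is allowable, and in that case
`𝒫(J, ≲, K, ξ) = 𝒫(I, ≼, K, ξ ∘ ψ)`. -/
theorem pRel_transitivity
    {I J K : Type*} [Fintype I] [Fintype J] [Fintype K]
    (pr : I → I → Prop) (hpr : IsPartialOrder I pr)
    (ψ : I → J) (hψ : Function.Surjective ψ) (h1 : Allowable pr ψ)
    (ξ : J → K) (hξ : Function.Surjective ξ) :
    (Allowable (PRel pr ψ) ξ ↔ Allowable pr (ξ ∘ ψ)) ∧
    (Allowable (PRel pr ψ) ξ → PRel (PRel pr ψ) ξ = PRel pr (ξ ∘ ψ)) :=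
  pRel_transitivity_general pr ψ ξ

end JoyceIII
end

section
/- For all integers l ≥ 1 and m ≥ 1, Σ_{n = max(l, m)}^{l + m} (−1)^{n−1} · (n−1)! / ((n−l)! · (n−m)! · (l+m−n)!) = 0, as an identity of rational numbers. -/
/-!
Up to the factor `(-1)^(l-1)/m`, the term with `n = l + j` is `(-1)^j C(m,j) C(l-1+j, m-1)`, and
the terms with `l ≤ n < m` that this adds vanish. So the sum is, up to sign, the `m`-th forward
difference at `l - 1` of `x ↦ C(x, m-1)`, a polynomial of degree `m - 1 < m`, hence zero.
-/

namespace JoyceIII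

open Finset fwdDiff Nat

theorem fwdDiff_iter_choose_eq_zero_of_lt {b n : ℕ} (h : b < n) :
    (Δ_[1])^[n] (fun x ↦ x.choose b : ℕ → ℤ) = 0 := by
  obtain ⟨d, rfl⟩ := Nat.exists_eq_add_of_lt h
  have hb : (Δ_[1])^[b] (fun x ↦ x.choose b : ℕ → ℤ) = fun _ ↦ 1 := by
    simpa using fwdDiff_iter_choose 0 b
  rw [add_assoc, add_comm, Function.iterate_add_apply, hb, Function.iterate_succ_apply,
    fwdDiff_const]
  exact Function.iterate_fixed (fwdDiff_const 1 0) d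

theorem alternating_sum_range_choose_mul_choose_add_eq_zero {a b n : ℕ} (h : b < n) :
    ∑ k ∈ range (n + 1), (-1 : ℤ) ^ k * n.choose k * (a + k).choose b = 0 := by
  have hΔ := congr_fun (fwdDiff_iter_choose_eq_zero_of_lt h) a
  rw [fwdDiff_iter_eq_sum_shift, Pi.zero_apply] at hΔ
  calc ∑ k ∈ range (n + 1), (-1 : ℤ) ^ k * n.choose k * (a + k).choose b
      = (-1) ^ n * ∑ k ∈ range (n + 1),
          ((-1 : ℤ) ^ (n - k) * n.choose k) • ((a + k • 1).choose b : ℤ) := by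
        rw [mul_sum]
        refine sum_congr rfl fun k hk ↦ ?_
        obtain ⟨j, rfl⟩ := Nat.exists_eq_add_of_le (Nat.lt_succ_iff.mp (mem_range.mp hk))
        rw [smul_eq_mul, smul_eq_mul, mul_one, Nat.add_sub_cancel_left]
        ring_nf
        rw [pow_mul', neg_one_sq, one_pow, mul_one]
    _ = 0 := by rw [hΔ, mul_zero]

theorem factorial_div_factorials_eq_choose_mul_choose_div {K : Type*} [Field K] [CharZero K]
    {l m n : ℕ} (hm : 0 < m) (hln : l ≤ n) (hmn : m ≤ n) (hn : n ≤ l + m) :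
    ((n - 1)! : K) / ((n - l)! * (n - m)! * (l + m - n)!) =
      (n - 1).choose (m - 1) * m.choose (n - l) / m := by
  have h₁ := choose_mul_factorial_mul_factorial (n := n - 1) (k := m - 1) (by omega)
  have h₂ := choose_mul_factorial_mul_factorial (n := m) (k := n - l) (by omega)
  rw [show n - 1 - (m - 1) = n - m by omega] at h₁
  rw [show m - (n - l) = l + m - n by omega] at h₂
  have key : (n - 1).choose (m - 1) * m.choose (n - l) * ((n - l)! * (n - m)! * (l + m - n)!) =
      (n - 1)! * m := by
    apply Nat.eq_of_mul_eq_mul_right (factorial_pos (m - 1))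
    calc _ = ((n - 1).choose (m - 1) * (m - 1)! * (n - m)!) *
            (m.choose (n - l) * (n - l)! * (l + m - n)!) := by ring
      _ = (n - 1)! * m * (m - 1)! := by
        rw [h₁, h₂, ← mul_factorial_pred hm.ne']
        ring
  rw [div_eq_div_iff (by simp [factorial_ne_zero]) (by simpa using hm.ne')]
  exact_mod_cast key.symm

/-- The combinatorial identity at the end of the proof of Theorem 7.7:
for `l, m ≥ 1`,
`Σ_{n = max(l,m)}^{l+m} (−1)^{n−1} (n−1)! / ((n−l)! (n−m)! (l+m−n)!) = 0`. -/
theorem alternating_factorial_sum_eq_zero (l m : ℕ) (hl : 1 ≤ l) (hm : 1 ≤ m) :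
    ∑ n ∈ Finset.Icc (max l m) (l + m),
      (-1 : ℚ) ^ (n - 1) * ((n - 1).factorial : ℚ) /
        (((n - l).factorial : ℚ) * ((n - m).factorial : ℚ) *
          ((l + m - n).factorial : ℚ)) = 0 := by
  set g : ℕ → ℚ := fun n ↦ (-1) ^ (n - 1) * (n - 1).choose (m - 1) * m.choose (n - l)
  have hterm : ∀ n ∈ Icc (max l m) (l + m),
      (-1 : ℚ) ^ (n - 1) * ((n - 1)! : ℚ) / ((n - l)! * (n - m)! * (l + m - n)!) = g n / m := by
    intro n hn
    obtain ⟨hmax, hn⟩ := mem_Icc.mp hn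
    rw [mul_div_assoc, factorial_div_factorials_eq_choose_mul_choose_div hm
      (le_of_max_le_left hmax) (le_of_max_le_right hmax) hn]
    ring
  have hextend : ∑ n ∈ Icc (max l m) (l + m), g n = ∑ n ∈ Icc l (l + m), g n := by
    refine sum_subset (Icc_subset_Icc_left (le_max_left l m)) fun n hn hn' ↦ ?_
    simp only [mem_Icc] at hn hn'
    simp [g, choose_eq_zero_of_lt (show n - 1 < m - 1 by omega)]
  have hshift : ∑ n ∈ Icc l (l + m), g n =
      (-1) ^ (l - 1) * ∑ j ∈ range (m + 1),
        ((-1 : ℚ) ^ j * m.choose j * (l - 1 + j).choose (m - 1)) := by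
    rw [← Ico_add_one_right_eq_Icc, sum_Ico_eq_sum_range, show l + m + 1 - l = m + 1 by omega,
      mul_sum]
    refine sum_congr rfl fun j _ ↦ ?_
    simp only [g, show l + j - 1 = l - 1 + j by omega, Nat.add_sub_cancel_left, pow_add]
    ring
  have hvanish : ∑ j ∈ range (m + 1),
      ((-1 : ℚ) ^ j * m.choose j * (l - 1 + j).choose (m - 1)) = 0 := by
    exact_mod_cast alternating_sum_range_choose_mul_choose_add_eq_zero (by omega)
  rw [sum_congr rfl hterm, ← sum_div, hextend, hshift, hvanish, mul_zero, zero_div]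

end JoyceIII
end

section
/- Let n, l, m be nonnegative integers with max(l, m) ≤ n ≤ l + m. Then the number of pairs (φ, ψ) of maps φ : {0, 1, …, n} → {0, 1, …, l} and ψ : {0, 1, …, n} → {0, 1, …, m}, both surjective and weakly increasing (i ≤ j implies φ(i) ≤ φ(j) and ψ(i) ≤ ψ(j)), such that for each i = 1, …, n either φ(i−1) ≠ φ(i) or ψ(i−1) ≠ ψ(i), equals n! / ((n−l)! · (n−m)! · (l+m−n)!). -/
/-!
A monotone surjection `φ : {0,…,n} → {0,…,l}` starts at `0` and, being surjective, never skips a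
value, so `φ j` is the number of jumps `φ (i) ≠ φ (i + 1)` with `i < j`. Hence `φ` is determined by
its jump set, an `l`-subset of `{0,…,n-1}`, and every `l`-subset arises. The pairs to be counted
thus correspond to pairs `(A, B)` of an `l`-subset and an `m`-subset covering `{0,…,n-1}`. Such a
pair is given by `B` and by the complement of `A`, an `(n-l)`-subset of `B`, so there are
`C(n, m) · C(m, n - l) = n! / ((n-l)! (n-m)! (l+m-n)!)` of them.
-/

open Finset Function

theorem Monotone.wcovBy_of_surjective {α β : Type*} [LinearOrder α] [Preorder β]
    {f : α → β} (hf : Monotone f) (hs : Surjective f) {a b : α} (hab : a ⋖ b) : f a ⩿ f b := by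
  refine ⟨hf hab.le, fun c hac hcb => ?_⟩
  obtain ⟨x, rfl⟩ := hs c
  rcases le_or_gt x a with hxa | hax
  · exact (hf hxa).not_gt hac
  · exact (hf (hab.ge_of_gt hax)).not_gt hcb

theorem Nat.exists_count_eq (p : ℕ → Prop) [DecidablePred p] {n k : ℕ}
    (hk : k ≤ Nat.count p n) : ∃ j ≤ n, Nat.count p j = k := by
  induction n with
  | zero => exact ⟨0, le_rfl, by simp_all⟩
  | succ n ih =>
    rcases hk.lt_or_eq with hlt | heq
    · have : Nat.count p (n + 1) ≤ Nat.count p n + 1 := by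
        rw [Nat.count_succ]; split_ifs <;> omega
      obtain ⟨j, hjn, hj⟩ := ih (by omega)
      exact ⟨j, by omega, hj⟩
    · exact ⟨n + 1, le_rfl, heq.symm⟩

theorem Finset.compl_subset_iff_union {α : Type*} [Fintype α] [DecidableEq α]
    {s t : Finset α} : sᶜ ⊆ t ↔ s ∪ t = univ := by
  rw [← codisjoint_iff_compl_le_right, codisjoint_iff]
  rfl

namespace JoyceIII

theorem card_pairs_union_eq_univ {α : Type*} [Fintype α] [DecidableEq α] {a b : ℕ}
    (ha : a ≤ Fintype.card α) :
    #{q : Finset α × Finset α | #q.1 = a ∧ #q.2 = b ∧ q.1 ∪ q.2 = univ} =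
      (Fintype.card α).choose b * b.choose (Fintype.card α - a) := by
  have hbij : #{q : Finset α × Finset α | #q.1 = a ∧ #q.2 = b ∧ q.1 ∪ q.2 = univ} =
      #((powersetCard b (univ : Finset α)).sigma fun B => powersetCard (Fintype.card α - a) B) := by
    refine card_nbij' (fun q => ⟨q.2, q.1ᶜ⟩) (fun p => (p.2ᶜ, p.1)) ?_ ?_ ?_ ?_
    · rintro ⟨A, B⟩ hq
      obtain ⟨hA, hB, hAB⟩ := (mem_filter.1 hq).2
      simp [card_compl, hA, hB, compl_subset_iff_union.2 hAB]
    · rintro ⟨B, C⟩ hp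
      simp only [coe_sigma, Set.mem_sigma_iff, mem_coe, mem_powersetCard, subset_univ,
        true_and] at hp
      obtain ⟨hB, hCB, hC⟩ := hp
      simp only [coe_filter, mem_univ, true_and, Set.mem_ofPred_eq, card_compl, hC, hB,
        ← compl_subset_iff_union, compl_compl]
      exact ⟨by omega, hCB⟩
    · intro q _
      simp
    · intro p _
      simp
  rw [hbij, card_sigma, sum_const_nat fun B hB => by
    rw [card_powersetCard, (mem_powersetCard.1 hB).2], card_powersetCard, card_univ]

section JumpSet

variable {n l : ℕ}

section CountMem

variable (A : Finset (Fin n))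

theorem count_mem_map_val_succ (i : Fin n) :
    Nat.count (· ∈ A.map Fin.valEmbedding) (i + 1) =
      Nat.count (· ∈ A.map Fin.valEmbedding) i + if i ∈ A then 1 else 0 := by
  simp [Nat.count_succ, Fin.val_inj]

theorem count_mem_map_val_of_le {j : ℕ} (hj : n ≤ j) :
    Nat.count (· ∈ A.map Fin.valEmbedding) j = #A := by
  rw [Nat.count_eq_card_filter_range, filter_mem_eq_inter, inter_eq_right.2, card_map]
  intro x hx
  obtain ⟨i, -, rfl⟩ := mem_map.1 hx
  exact mem_range.2 (i.isLt.trans_le hj)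

end CountMem

def jumpSet {α : Type*} [DecidableEq α] (f : Fin (n + 1) → α) : Finset (Fin n) :=
  {i | f i.castSucc ≠ f i.succ}

@[simp]
theorem mem_jumpSet {α : Type*} [DecidableEq α] {f : Fin (n + 1) → α} {i : Fin n} :
    i ∈ jumpSet f ↔ f i.castSucc ≠ f i.succ := by
  simp [jumpSet]

section MonotoneSurjective

variable {φ : Fin (n + 1) → Fin (l + 1)} (hmono : Monotone φ) (hsurj : Surjective φ)
include hmono hsurj

theorem val_eq_count_jumpSet (j : Fin (n + 1)) :
    (φ j : ℕ) = Nat.count (· ∈ (jumpSet φ).map Fin.valEmbedding) j := by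
  induction j using Fin.induction with
  | zero =>
    obtain ⟨j, hj⟩ := hsurj 0
    have h0 : φ 0 ≤ 0 := hj ▸ hmono (Fin.zero_le j)
    simp [Fin.le_zero_iff.1 h0]
  | succ i ih =>
    have hcov : φ i.castSucc ⩿ φ i.succ :=
      hmono.wcovBy_of_surjective hsurj (by simp [Fin.covBy_iff])
    rw [Fin.val_castSucc] at ih
    rw [Fin.val_succ, count_mem_map_val_succ, ← ih]
    rcases wcovBy_iff_covBy_or_eq.1 hcov with h | h
    · rw [if_pos (mem_jumpSet.2 h.ne)]
      exact (Nat.covBy_iff_add_one_eq.1 (Fin.covBy_iff.1 h)).symm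
    · rw [if_neg (by simp [h]), h, add_zero]

theorem card_jumpSet : #(jumpSet φ) = l := by
  obtain ⟨j, hj⟩ := hsurj (Fin.last l)
  have hlast : φ (Fin.last n) = Fin.last l :=
    le_antisymm (Fin.le_last _) (hj ▸ hmono (Fin.le_last j))
  have h := val_eq_count_jumpSet hmono hsurj (Fin.last n)
  rw [hlast, Fin.val_last, Fin.val_last, count_mem_map_val_of_le _ le_rfl] at h
  exact h.symm

end MonotoneSurjective

def ofJumpSet (A : Finset (Fin n)) (hA : #A = l) (j : Fin (n + 1)) : Fin (l + 1) :=
  ⟨Nat.count (· ∈ A.map Fin.valEmbedding) j, by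
    rw [Nat.lt_succ_iff, ← hA, ← count_mem_map_val_of_le A le_rfl]
    exact Nat.count_monotone _ (Nat.lt_succ_iff.1 j.isLt)⟩

section OfJumpSet

variable (A : Finset (Fin n)) (hA : #A = l)

theorem monotone_ofJumpSet : Monotone (ofJumpSet A hA) :=
  fun _ _ hij => Fin.le_def.2 (Nat.count_monotone _ hij)

theorem surjective_ofJumpSet : Surjective (ofJumpSet A hA) := by
  intro k
  have hk : (k : ℕ) ≤ Nat.count (· ∈ A.map Fin.valEmbedding) n := by
    rw [count_mem_map_val_of_le A le_rfl, hA]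
    exact Nat.lt_succ_iff.1 k.isLt
  obtain ⟨j, hjn, hj⟩ := Nat.exists_count_eq _ hk
  exact ⟨⟨j, Nat.lt_succ_of_le hjn⟩, Fin.ext hj⟩

theorem jumpSet_ofJumpSet : jumpSet (ofJumpSet A hA) = A := by
  ext i
  simp only [mem_jumpSet, ofJumpSet, ne_eq, Fin.ext_iff, Fin.val_castSucc, Fin.val_succ,
    count_mem_map_val_succ]
  split_ifs <;> simp_all

end OfJumpSet

theorem ofJumpSet_jumpSet {φ : Fin (n + 1) → Fin (l + 1)} (hmono : Monotone φ)
    (hsurj : Surjective φ) : ofJumpSet (jumpSet φ) (card_jumpSet hmono hsurj) = φ :=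
  funext fun j => Fin.ext (val_eq_count_jumpSet hmono hsurj j).symm

end JumpSet

def jumpSetPairEquiv (n l m : ℕ) :
    {p : (Fin (n + 1) → Fin (l + 1)) × (Fin (n + 1) → Fin (m + 1)) //
      Surjective p.1 ∧ Surjective p.2 ∧ Monotone p.1 ∧ Monotone p.2 ∧
        ∀ i : Fin n, p.1 i.castSucc ≠ p.1 i.succ ∨ p.2 i.castSucc ≠ p.2 i.succ} ≃
      {q : Finset (Fin n) × Finset (Fin n) // #q.1 = l ∧ #q.2 = m ∧ q.1 ∪ q.2 = univ} where
  toFun p := ⟨(jumpSet p.1.1, jumpSet p.1.2), card_jumpSet p.2.2.2.1 p.2.1,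
    card_jumpSet p.2.2.2.2.1 p.2.2.1, by simpa [eq_univ_iff_forall] using p.2.2.2.2.2⟩
  invFun q := ⟨(ofJumpSet q.1.1 q.2.1, ofJumpSet q.1.2 q.2.2.1), surjective_ofJumpSet q.1.1 q.2.1,
    surjective_ofJumpSet q.1.2 q.2.2.1, monotone_ofJumpSet q.1.1 q.2.1,
    monotone_ofJumpSet q.1.2 q.2.2.1, fun i => by
      simpa [← mem_jumpSet, jumpSet_ofJumpSet] using mem_union.1 (eq_univ_iff_forall.1 q.2.2.2 i)⟩
  left_inv p := Subtype.ext <| Prod.ext (ofJumpSet_jumpSet p.2.2.2.1 p.2.1)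
    (ofJumpSet_jumpSet p.2.2.2.2.1 p.2.2.1)
  right_inv q := Subtype.ext <| Prod.ext (jumpSet_ofJumpSet q.1.1 q.2.1)
    (jumpSet_ofJumpSet q.1.2 q.2.2.1)

/-- The counting identity in the proof of Theorem 7.7: for
`max(l, m) ≤ n ≤ l + m`, the number of pairs `(φ, ψ)` of surjective monotone
maps `φ : {0,…,n} → {0,…,l}`, `ψ : {0,…,n} → {0,…,m}` such that for each
`i = 1, …, n` either `φ(i−1) ≠ φ(i)` or `ψ(i−1) ≠ ψ(i)`, equals
`n! / ((n−l)! (n−m)! (l+m−n)!)`. -/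
theorem card_surjective_monotone_pairs (n l m : ℕ)
    (hl : l ≤ n) (hm : m ≤ n) (hnm : n ≤ l + m) :
    (Nat.card {p : (Fin (n + 1) → Fin (l + 1)) × (Fin (n + 1) → Fin (m + 1)) //
        Function.Surjective p.1 ∧ Function.Surjective p.2 ∧
        Monotone p.1 ∧ Monotone p.2 ∧
        ∀ i : Fin n, p.1 i.castSucc ≠ p.1 i.succ ∨ p.2 i.castSucc ≠ p.2 i.succ} : ℚ) =
      (n.factorial : ℚ) /
        (((n - l).factorial : ℚ) * ((n - m).factorial : ℚ) *
          ((l + m - n).factorial : ℚ)) := by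
  rw [Nat.card_congr (jumpSetPairEquiv n l m), Nat.card_eq_fintype_card, Fintype.card_subtype,
    card_pairs_union_eq_univ (by simpa using hl), Fintype.card_fin, Nat.cast_mul,
    Nat.cast_choose ℚ hm, Nat.cast_choose ℚ (show n - l ≤ m by omega),
    show m - (n - l) = l + m - n by omega]
  field_simp

end JoyceIII
end

section
/- Let (τ, T, ≤) be a weak stability condition on the abelian category 𝒜 with respect to cl, and suppose 𝒜 is τ-artinian. Then every nonzero object B of 𝒜 has a nonzero subobject A ⊆ B such that A is τ-semistable and τ(cl A) ≥ τ(cl B). -/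
open CategoryTheory CategoryTheory.Limits

namespace JoyceIII

universe u v

variable {𝒜 : Type u} [Category.{v} 𝒜] [Abelian 𝒜]
variable {K : Type*} [AddCommGroup K] {T : Type*} [LinearOrder T]

/-- `α ∈ C(𝒜)`: `α` is the class of some nonzero object of `𝒜`. -/
def InC (cl : 𝒜 → K) (α : K) : Prop := ∃ X : 𝒜, ¬ IsZero X ∧ cl X = α

/-- `cl` is additive on short exact sequences: `cl Y = cl X + cl Z` for every
short exact sequence `0 → X → Y → Z → 0`. -/
def ClAdditive (cl : 𝒜 → K) : Prop :=
  ∀ S : ShortComplex 𝒜, S.ShortExact → cl S.X₂ = cl S.X₁ + cl S.X₃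

/-- `cl X = 0` implies `X ≅ 0`. -/
def ClNondeg (cl : 𝒜 → K) : Prop := ∀ X : 𝒜, cl X = 0 → IsZero X

/-- `(τ, T, ≤)` is a weak stability condition: the weak seesaw inequality holds. -/
def IsWeakStability (cl : 𝒜 → K) (τ : K → T) : Prop :=
  ∀ α β γ : K, InC cl α → InC cl β → InC cl γ → β = α + γ →
    (τ α ≤ τ β ∧ τ β ≤ τ γ) ∨ (τ γ ≤ τ β ∧ τ β ≤ τ α)

/-- `(τ, T, ≤)` is a stability condition: the seesaw inequality holds. -/
def IsStability (cl : 𝒜 → K) (τ : K → T) : Prop :=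
  ∀ α β γ : K, InC cl α → InC cl β → InC cl γ → β = α + γ →
    (τ α < τ β ∧ τ β < τ γ) ∨ (τ γ < τ β ∧ τ β < τ α) ∨ (τ α = τ β ∧ τ β = τ γ)

/-- The quotient object `X/S` of `X` by a subobject `S`, i.e. the cokernel of
the inclusion `S → X`. -/
noncomputable def quotBySub {X : 𝒜} (S : Subobject X) : 𝒜 := cokernel S.arrow

/-- The quotient `B / A` of subobjects `A ≤ B` of `X` (implemented as the
cokernel of the inclusion `A ⊓ B → B`, which agrees with `B / A` when `A ≤ B`). -/
noncomputable def subQuot {X : 𝒜} (A B : Subobject X) : 𝒜 :=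
  cokernel (Subobject.ofLE (A ⊓ B) B inf_le_right)

/-- `X` is `τ`-semistable: `X` is nonzero and every subobject `S ⊆ X` with
`S ≇ 0`, `S ≠ X` satisfies `τ(cl S) ≤ τ(cl (X/S))`. -/
def Semistable (cl : 𝒜 → K) (τ : K → T) (X : 𝒜) : Prop :=
  ¬ IsZero X ∧ ∀ S : Subobject X, ¬ IsZero ((S : 𝒜)) → S ≠ ⊤ →
    τ (cl ((S : 𝒜))) ≤ τ (cl (quotBySub S))

/-- `X` is `τ`-stable: `X` is nonzero and every subobject `S ⊆ X` with
`S ≇ 0`, `S ≠ X` satisfies `τ(cl S) < τ(cl (X/S))`. -/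
def Stable (cl : 𝒜 → K) (τ : K → T) (X : 𝒜) : Prop :=
  ¬ IsZero X ∧ ∀ S : Subobject X, ¬ IsZero ((S : 𝒜)) → S ≠ ⊤ →
    τ (cl ((S : 𝒜))) < τ (cl (quotBySub S))

/-- `𝒜` is noetherian: all ascending chains of subobjects stabilize. -/
def CatNoetherian (ℬ : Type u) [Category.{v} ℬ] [Abelian ℬ] : Prop :=
  ∀ (X : ℬ) (A : ℕ → Subobject X), (∀ n, A n ≤ A (n + 1)) →
    ∃ N, ∀ n, N ≤ n → A n = A N

/-- `𝒜` is `τ`-artinian: there is no infinite chain of subobjects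
`⋯ ⊆ A₂ ⊆ A₁ ⊆ X` with `A (n+1) ≠ A n` and `τ(cl A (n+1)) ≥ τ(cl (A n / A (n+1)))`. -/
def TauArtinian (cl : 𝒜 → K) (τ : K → T) : Prop :=
  ¬ ∃ (X : 𝒜) (A : ℕ → Subobject X),
      (∀ n, A (n + 1) ≤ A n) ∧ (∀ n, A (n + 1) ≠ A n) ∧
      ∀ n, τ (cl (subQuot (A (n + 1)) (A n))) ≤ τ (cl ((A (n + 1) : 𝒜)))

/-!
Call `A' ⊊ A` a `τ`-descent when `τ(cl (A/A')) ≤ τ(cl A')`; `τ`-artinianity says exactly that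
descents are well-founded. Take `A` minimal for descent among the nonzero subobjects of `B` with
`τ(cl A) ≥ τ(cl B)` (the set contains `B`). If `A` were not semistable, a destabilizing
`S ⊊ A` has `τ(cl (A/S)) < τ(cl S)`, so the weak seesaw forces `τ(cl A) ≤ τ(cl S)`: then `S`
is a descent from `A` lying in the same set, contradicting minimality.
-/

variable {cl : 𝒜 → K} {τ : K → T}

namespace ClAdditive

lemma cl_eq_zero_of_isZero (hadd : ClAdditive cl) {X : 𝒜} (hX : IsZero X) : cl X = 0 := by
  have hexact : (ShortComplex.mk (𝟙 X) (𝟙 X) (hX.eq_of_src _ _)).ShortExact :=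
    ⟨ShortComplex.exact_of_isZero_X₂ _ hX⟩
  simpa using (hadd _ hexact).symm

open ZeroObject in
lemma cl_eq_of_iso (hadd : ClAdditive cl) {X Y : 𝒜} (e : X ≅ Y) : cl X = cl Y := by
  have hexact : (ShortComplex.mk (0 : (0 : 𝒜) ⟶ X) e.hom zero_comp).ShortExact :=
    ⟨(ShortComplex.exact_iff_mono _ rfl).2 inferInstance⟩
  simpa [hadd.cl_eq_zero_of_isZero (isZero_zero 𝒜)] using hadd _ hexact

lemma cl_eq_add_cl_quotBySub (hadd : ClAdditive cl) {X : 𝒜} (S : Subobject X) :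
    cl X = cl (S : 𝒜) + cl (quotBySub S) :=
  hadd _ ⟨ShortComplex.exact_cokernel _⟩

end ClAdditive

lemma not_isZero_quotBySub {X : 𝒜} {S : Subobject X} (hS : S ≠ ⊤) : ¬ IsZero (quotBySub S) := by
  intro hzero
  have : Epi S.arrow := Preadditive.epi_of_isZero_cokernel _ hzero
  have : IsIso S.arrow := isIso_of_mono_of_epi _
  exact hS ((Subobject.isIso_arrow_iff_eq_top S).1 this)

lemma exists_destabilizing_subobject (hadd : ClAdditive cl) (hwsc : IsWeakStability cl τ)
    {X : 𝒜} (hX : ¬ IsZero X) (hns : ¬ Semistable cl τ X) :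
    ∃ S : Subobject X, ¬ IsZero (S : 𝒜) ∧ S ≠ ⊤ ∧
      τ (cl (quotBySub S)) < τ (cl (S : 𝒜)) ∧ τ (cl X) ≤ τ (cl (S : 𝒜)) := by
  simp only [Semistable, hX, not_false_eq_true, true_and, not_forall, not_le] at hns
  obtain ⟨S, hS0, hStop, hSlt⟩ := hns
  refine ⟨S, hS0, hStop, hSlt, ?_⟩
  -- the increasing branch of the weak seesaw on `0 → S → X → X/S → 0` would contradict `hSlt`
  rcases hwsc _ _ _ ⟨_, hS0, rfl⟩ ⟨_, hX, rfl⟩ ⟨_, not_isZero_quotBySub hStop, rfl⟩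
      (hadd.cl_eq_add_cl_quotBySub S) with ⟨h₁, h₂⟩ | ⟨-, h⟩
  · exact absurd (h₁.trans h₂) hSlt.not_ge
  · exact h

section SubobjectOfSubobject

open Subobject

omit [Abelian 𝒜] in
lemma mk_comp_arrow_lt {B : 𝒜} (A : Subobject B) {S : Subobject (A : 𝒜)} (hS : S ≠ ⊤) :
    mk (S.arrow ≫ A.arrow) < A := by
  have h := (subobjectOrderIso A).lt_iff_lt.2 (lt_top_iff_ne_top.2 hS)
  rw [OrderIso.map_top, ← Subtype.coe_lt_coe] at h
  exact h

noncomputable def subQuotMkCompArrowIso {B : 𝒜} (A : Subobject B) (S : Subobject (A : 𝒜)) :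
    subQuot (mk (S.arrow ≫ A.arrow)) A ≅ quotBySub S := by
  refine cokernel.mapIso _ S.arrow
    (isoOfEq _ _ (inf_of_le_left (mk_le_of_comm S.arrow rfl)) ≪≫ underlyingIso _)
    (Iso.refl _) ?_
  rw [← cancel_mono A.arrow]
  simp

end SubobjectOfSubobject

def TauDescends (cl : 𝒜 → K) (τ : K → T) {X : 𝒜} (A' A : Subobject X) : Prop :=
  A' < A ∧ τ (cl (subQuot A' A)) ≤ τ (cl (A' : 𝒜))

omit [AddCommGroup K] in
lemma TauArtinian.wellFounded (hart : TauArtinian cl τ) (X : 𝒜) :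
    WellFounded (TauDescends cl τ (X := X)) :=
  wellFounded_iff_isEmpty_descending_chain.2
    ⟨fun ⟨A, hA⟩ => hart ⟨X, A, fun n => (hA n).1.le, fun n => (hA n).1.ne, fun n => (hA n).2⟩⟩

lemma exists_tauDescends_of_not_semistable (hadd : ClAdditive cl) (hwsc : IsWeakStability cl τ)
    {B : 𝒜} {A : Subobject B} (hA : ¬ IsZero (A : 𝒜)) (hns : ¬ Semistable cl τ (A : 𝒜)) :
    ∃ A' : Subobject B, TauDescends cl τ A' A ∧ ¬ IsZero (A' : 𝒜) ∧
      τ (cl (A : 𝒜)) ≤ τ (cl (A' : 𝒜)) := by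
  obtain ⟨S, hS0, hStop, hSlt, hSge⟩ := exists_destabilizing_subobject hadd hwsc hA hns
  let e := Subobject.underlyingIso (S.arrow ≫ A.arrow)
  refine ⟨_, ⟨mk_comp_arrow_lt A hStop, ?_⟩, fun h => hS0 (h.of_iso e.symm), ?_⟩
  · rw [hadd.cl_eq_of_iso e, hadd.cl_eq_of_iso (subQuotMkCompArrowIso A S)]
    exact hSlt.le
  · rwa [hadd.cl_eq_of_iso e]

theorem exists_semistable_subobject_general (cl : 𝒜 → K) (τ : K → T)
    (hadd : ClAdditive cl) (hwsc : IsWeakStability cl τ) (hart : TauArtinian cl τ)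
    (B : 𝒜) (hB : ¬ IsZero B) :
    ∃ A : Subobject B, ¬ IsZero ((A : 𝒜)) ∧ Semistable cl τ ((A : 𝒜)) ∧
      τ (cl B) ≤ τ (cl ((A : 𝒜))) := by
  let eTop : ((⊤ : Subobject B) : 𝒜) ≅ B := asIso (⊤ : Subobject B).arrow
  obtain ⟨A, ⟨hA0, hAτ⟩, hmin⟩ := (hart.wellFounded B).has_min
    {A | ¬ IsZero (A : 𝒜) ∧ τ (cl B) ≤ τ (cl (A : 𝒜))}
    ⟨⊤, fun h => hB (h.of_iso eTop.symm), (congrArg τ (hadd.cl_eq_of_iso eTop)).ge⟩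
  refine ⟨A, hA0, by_contra fun hns => ?_, hAτ⟩
  obtain ⟨A', hdesc, hA'0, hA'τ⟩ := exists_tauDescends_of_not_semistable hadd hwsc hA0 hns
  exact hmin A' ⟨hA'0, hAτ.trans hA'τ⟩ hdesc

/-- **Step 1 of the proof of Theorem 4.4.** If `𝒜` is `τ`-artinian, every
nonzero object `B` has a nonzero `τ`-semistable subobject `A ⊆ B` with
`τ(cl A) ≥ τ(cl B)`. -/
theorem exists_semistable_subobject (cl : 𝒜 → K) (τ : K → T)
    (hadd : ClAdditive cl) (hnd : ClNondeg cl)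
    (hwsc : IsWeakStability cl τ) (hart : TauArtinian cl τ)
    (B : 𝒜) (hB : ¬ IsZero B) :
    ∃ A : Subobject B, ¬ IsZero ((A : 𝒜)) ∧ Semistable cl τ ((A : 𝒜)) ∧
      τ (cl B) ≤ τ (cl ((A : 𝒜))) :=
  exists_semistable_subobject_general cl τ hadd hwsc hart B hB

end JoyceIII
end

section
/- Let (τ, T, ≤) be a weak stability condition on the abelian category 𝒜 with respect to cl, let X be an object of 𝒜, and let A, B ⊆ X be nonzero subobjects with A τ-semistable and τ(cl A) ≥ τ(cl B). Then τ(cl (A + B)) ≥ τ(cl B), where A + B denotes the join of A and B in the lattice of subobjects of X. -/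
open CategoryTheory CategoryTheory.Limits

namespace JoyceIII

universe u v

variable {𝒜 : Type u} [Category.{v} 𝒜] [Abelian 𝒜]
variable {K : Type*} [AddCommGroup K] {T : Type*} [LinearOrder T]

section Aux

variable {cl : 𝒜 → K}

lemma cl_isZero (hadd : ClAdditive cl) {Y : 𝒜} (hY : IsZero Y) : cl Y = 0 := by
  have hse : (ShortComplex.mk (𝟙 Y) (𝟙 Y)
      (by rw [Category.comp_id]; exact hY.eq_of_src _ _)).ShortExact :=
    { exact := ShortComplex.exact_of_isZero_X₂ _ hY }
  have := hadd _ hse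
  simpa using this.symm

open ZeroObject in
lemma cl_congr (hadd : ClAdditive cl) {Y Z : 𝒜} (e : Y ≅ Z) : cl Y = cl Z := by
  have hepi : Epi (0 : Z ⟶ (0 : 𝒜)) :=
    ⟨fun g h _ => (isZero_zero 𝒜).eq_of_src g h⟩
  have hse : (ShortComplex.mk e.hom (0 : Z ⟶ (0 : 𝒜)) comp_zero).ShortExact :=
    { exact := by
        rw [ShortComplex.exact_iff_epi _ rfl]
        exact inferInstance
      epi_g := hepi }
  have h := hadd _ hse
  rw [cl_isZero hadd (isZero_zero 𝒜)] at h
  simpa using h.symm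

lemma cl_of_mono (hadd : ClAdditive cl) {U V : 𝒜} (f : U ⟶ V) [Mono f] :
    cl V = cl U + cl (cokernel f) :=
  hadd (ShortComplex.mk f (cokernel.π f) (cokernel.condition f))
    { exact := ShortComplex.exact_of_g_is_cokernel _ (cokernelIsCokernel f) }

/-- Cokernels of two monos defining the same subobject are isomorphic. -/
noncomputable def cokIso {V U W : 𝒜} (f : U ⟶ V) (g : W ⟶ V) [Mono f] [Mono g]
    (h : Subobject.mk f = Subobject.mk g) : cokernel f ≅ cokernel g :=
  cokernel.mapIso f g (Subobject.isoOfMkEqMk f g h) (Iso.refl V)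
    (by simp)

/-- The kernel of `C → X → X/B` is `C ⊓ B` (as a subobject of `C`). -/
lemma mk_ker_eq {X : 𝒜} (B C : Subobject X) :
    Subobject.mk (kernel.ι (C.arrow ≫ cokernel.π B.arrow)) =
      Subobject.mk (Subobject.ofLE (C ⊓ B) C inf_le_left) := by
  apply le_antisymm
  · set π := cokernel.π B.arrow
    set k := kernel.ι (C.arrow ≫ π) with hk
    have hw : (k ≫ C.arrow) ≫ π = 0 := by rw [Category.assoc, kernel.condition]
    have hBf : B.Factors (k ≫ C.arrow) := by
      rw [← Abelian.monoLift_comp B.arrow (k ≫ C.arrow) hw]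
      exact Subobject.factors_comp_arrow _
    have hCf : C.Factors (k ≫ C.arrow) := Subobject.factors_comp_arrow _
    have hf : (C ⊓ B).Factors (k ≫ C.arrow) := (Subobject.inf_factors _).mpr ⟨hCf, hBf⟩
    refine Subobject.mk_le_mk_of_comm ((C ⊓ B).factorThru _ hf) ?_
    rw [← cancel_mono C.arrow, Category.assoc, Subobject.ofLE_arrow,
      Subobject.factorThru_arrow]
  · have hz : Subobject.ofLE (C ⊓ B) C inf_le_left ≫ C.arrow ≫ cokernel.π B.arrow = 0 := by
      rw [← Category.assoc, Subobject.ofLE_arrow,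
        ← Subobject.ofLE_arrow (inf_le_right : C ⊓ B ≤ B), Category.assoc,
        cokernel.condition, comp_zero]
    exact Subobject.mk_le_mk_of_comm (kernel.lift _ _ hz) (kernel.lift_ι _ _ _)

/-- The image of `A ⊔ B` in `X/B` equals the image of `A` in `X/B`. -/
lemma image_sup_eq {X : 𝒜} (A B : Subobject X) :
    imageSubobject ((A ⊔ B).arrow ≫ cokernel.π B.arrow) =
      imageSubobject (A.arrow ≫ cokernel.π B.arrow) := by
  set π := cokernel.π B.arrow
  set I := imageSubobject (A.arrow ≫ π) with hI
  apply le_antisymm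
  · have hA' : A ≤ Subobject.mk (pullback.snd I.arrow π) :=
      Subobject.le_mk_of_comm
        (pullback.lift (factorThruImageSubobject _) A.arrow (imageSubobject_arrow_comp _))
        (pullback.lift_snd _ _ _)
    have hB' : B ≤ Subobject.mk (pullback.snd I.arrow π) :=
      Subobject.le_mk_of_comm
        (pullback.lift 0 B.arrow
          (by rw [zero_comp]; exact (cokernel.condition _).symm))
        (pullback.lift_snd _ _ _)
    have hsup : A ⊔ B ≤ Subobject.mk (pullback.snd I.arrow π) := sup_le hA' hB'
    refine imageSubobject_le _ (Subobject.ofLEMk _ _ hsup ≫ pullback.fst I.arrow π) ?_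
    rw [Category.assoc, pullback.condition, ← Category.assoc, Subobject.ofLEMk_comp]
  · have h := imageSubobject_comp_le (Subobject.ofLE A (A ⊔ B) le_sup_left)
      ((A ⊔ B).arrow ≫ π)
    rwa [← Category.assoc, Subobject.ofLE_arrow] at h

/-- First isomorphism theorem: `C/(C ⊓ B) ≅ image (C → X/B)`. -/
noncomputable def cokOfLEIsoImage {X : 𝒜} (B C : Subobject X) :
    cokernel (Subobject.ofLE (C ⊓ B) C inf_le_left) ≅
      ((imageSubobject (C.arrow ≫ cokernel.π B.arrow) : Subobject (cokernel B.arrow)) : 𝒜) :=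
  (cokIso _ _ (mk_ker_eq B C).symm) ≪≫ Abelian.coimageIsoImage' _ ≪≫
    (imageSubobjectIso _).symm

lemma not_isZero_of_le {X : 𝒜} {P R : Subobject X} (h : P ≤ R)
    (hP : ¬ IsZero ((P : 𝒜))) : ¬ IsZero ((R : 𝒜)) :=
  fun hR => hP (IsZero.of_mono (Subobject.ofLE P R h) hR)

end Aux

/-- **Step 2 of the proof of Theorem 4.4.** If `A, B ⊆ X` are nonzero
subobjects with `A` `τ`-semistable and `τ(cl A) ≥ τ(cl B)`, then
`τ(cl (A + B)) ≥ τ(cl B)`, where `A + B = A ⊔ B` is the join in the lattice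
of subobjects of `X`. -/
theorem tau_join_ge (cl : 𝒜 → K) (τ : K → T)
    (hadd : ClAdditive cl) (hnd : ClNondeg cl)
    (hwsc : IsWeakStability cl τ)
    (X : 𝒜) (A B : Subobject X)
    (hA : ¬ IsZero ((A : 𝒜))) (hB : ¬ IsZero ((B : 𝒜)))
    (hAss : Semistable cl τ ((A : 𝒜)))
    (hle : τ (cl ((B : 𝒜))) ≤ τ (cl ((A : 𝒜)))) :
    τ (cl ((B : 𝒜))) ≤ τ (cl (((A ⊔ B : Subobject X) : 𝒜))) := by
  classical
  set Q := cokernel (Subobject.ofLE (A ⊓ B) A inf_le_left) with hQdef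
  set Q' := cokernel (Subobject.ofLE ((A ⊔ B) ⊓ B) (A ⊔ B) inf_le_left) with hQ'def
  have hQQ' : cl Q = cl Q' := by
    have h1 := cl_congr hadd (cokOfLEIsoImage B A)
    have h2 := cl_congr hadd (cokOfLEIsoImage B (A ⊔ B))
    have h3 := congrArg (fun S : Subobject (cokernel B.arrow) => cl ((S : 𝒜)))
      (image_sup_eq A B)
    rw [h1, h2]
    exact h3.symm
  have hinf : (A ⊔ B) ⊓ B = B := inf_eq_right.mpr le_sup_right
  have eqA : cl ((A : 𝒜)) = cl (((A ⊓ B : Subobject X) : 𝒜)) + cl Q :=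
    cl_of_mono hadd _
  have eqS : cl (((A ⊔ B : Subobject X) : 𝒜)) = cl ((B : 𝒜)) + cl Q := by
    have h := cl_of_mono hadd (Subobject.ofLE ((A ⊔ B) ⊓ B) (A ⊔ B) inf_le_left)
    have hclB : cl ((((A ⊔ B) ⊓ B : Subobject X)) : 𝒜) = cl ((B : 𝒜)) := by rw [hinf]
    rw [h, hclB, ← hQQ']
  by_cases hQz : IsZero Q
  · rw [eqS, cl_isZero hadd hQz, add_zero]
  · have hQ'nz : ¬ IsZero Q' := fun h => hQz (hnd Q (by rw [hQQ', cl_isZero hadd h]))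
    have hsupnz : ¬ IsZero (((A ⊔ B : Subobject X)) : 𝒜) :=
      not_isZero_of_le le_sup_right hB
    have hAQ : τ (cl ((A : 𝒜))) ≤ τ (cl Q) := by
      by_cases h0 : IsZero (((A ⊓ B : Subobject X)) : 𝒜)
      · rw [eqA, cl_isZero hadd h0, zero_add]
      · set S : Subobject ((A : 𝒜)) :=
          Subobject.mk (Subobject.ofLE (A ⊓ B) A inf_le_left) with hSdef
        have hiso : ((S : 𝒜)) ≅ (((A ⊓ B : Subobject X)) : 𝒜) :=
          Subobject.underlyingIso _
        have hS1 : ¬ IsZero ((S : 𝒜)) := fun h => h0 (IsZero.of_iso h hiso.symm)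
        have hS2 : S ≠ ⊤ := by
          intro h
          haveI : IsIso (Subobject.ofLE (A ⊓ B) A inf_le_left) :=
            (Subobject.isIso_iff_mk_eq_top _).mpr h
          exact hQz (IsZero.of_iso (isZero_zero 𝒜) (cokernel.ofEpi _))
        have hsemi := hAss.2 S hS1 hS2
        have e1 : cl ((S : 𝒜)) = cl (((A ⊓ B : Subobject X)) : 𝒜) := cl_congr hadd hiso
        have e2 : cl (quotBySub S) = cl Q :=
          cl_congr hadd (cokIso _ _ (Subobject.mk_arrow S))
        rw [e1, e2] at hsemi
        rcases hwsc _ _ _ ⟨_, h0, rfl⟩ ⟨_, hA, rfl⟩ ⟨Q, hQz, rfl⟩ eqA with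
          ⟨h1, h2⟩ | ⟨h1, h2⟩
        · exact h2
        · exact le_trans h2 hsemi
    have hBQ : τ (cl ((B : 𝒜))) ≤ τ (cl Q) := le_trans hle hAQ
    rcases hwsc _ _ _ ⟨_, hB, rfl⟩ ⟨_, hsupnz, rfl⟩ ⟨Q', hQ'nz, hQQ'.symm⟩ eqS with
      ⟨h1, h2⟩ | ⟨h1, h2⟩
    · exact h1
    · exact le_trans hBQ h1

end JoyceIII
end
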